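/- arXiv:2305.00633 — 2 statements merged into one kernel-verified Lean document; each statement's English description precedes it below -/
import Mathlib

section
/- Let S* be a finite nonempty set, let τ > 0, and let E : S* → ℝ be a nonnegative score function. Set f(s) = exp(E(s)/τ). Let S ⊆ S* be a nonempty subset with |S| = M, and suppose c̄ and c are constants with c̄ ≥ f(s) ≥ c for all s ∈ S* and c ≥ 1; set r = c̄/c. Define P*(s) = f(s) / ∑_{s' ∈ S*} f(s') and P(s) = f(s) / ∑_{s' ∈ S} f(s'). Then for every s ∈ S, |P*(s) − P(s)| ≤ r² · (1 − M/|S*|) / M. -/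
/-! With `A = ∑_T f` and `B = ∑_S f`, the gap is `f s (A - B) / (A B)`. Since `A - B` sums over
`T \ S`, the numerator is at most `C · C (|T| - |S|)`, while `A B ≥ c |T| · c |S|`. -/

open Finset

lemma abs_div_sub_div_of_le {x a b : ℝ} (hx : 0 ≤ x) (hb : 0 < b) (hba : b ≤ a) :
    |x / a - x / b| = x * (a - b) / (a * b) := by
  have ha : 0 < a := hb.trans_le hba
  rw [abs_of_nonpos (sub_nonpos.mpr (div_le_div_of_nonneg_left hx hb hba))]
  field_simp
  ring

lemma sum_sub_sum_le_of_subset {α : Type*} {S T : Finset α} {f : α → ℝ} {C : ℝ} (hST : S ⊆ T)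
    (hup : ∀ t ∈ T, f t ≤ C) :
    ∑ t ∈ T, f t - ∑ t ∈ S, f t ≤ C * (#T - #S) := by
  classical
  rw [← sum_sdiff_eq_sub hST, ← Nat.cast_sub (card_le_card hST), ← card_sdiff_of_subset hST,
    mul_comm, ← nsmul_eq_mul]
  exact sum_le_card_nsmul _ _ _ fun t ht => hup t (mem_sdiff.mp ht).1

theorem abs_div_sum_sub_div_sum_subset_le {α : Type*} {S T : Finset α} {f : α → ℝ} {c C : ℝ}
    (hS : S.Nonempty) (hST : S ⊆ T) (hc : 0 < c)
    (hlow : ∀ t ∈ T, c ≤ f t) (hup : ∀ t ∈ T, f t ≤ C) {s : α} (hs : s ∈ S) :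
    |f s / ∑ t ∈ T, f t - f s / ∑ t ∈ S, f t| ≤ (C / c) ^ 2 * ((1 - #S / #T) / #S) := by
  have hS_card : (0 : ℝ) < #S := by exact_mod_cast hS.card_pos
  have hT_card : (0 : ℝ) < #T := by exact_mod_cast (hS.mono hST).card_pos
  have hcard_le : (#S : ℝ) ≤ #T := by exact_mod_cast card_le_card hST
  have hfs_low : c ≤ f s := hlow s (hST hs)
  have hfs_up : f s ≤ C := hup s (hST hs)
  have hC : 0 ≤ C := hc.le.trans (hfs_low.trans hfs_up)
  have hT_sum : c * #T ≤ ∑ t ∈ T, f t := by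
    rw [mul_comm, ← nsmul_eq_mul]; exact card_nsmul_le_sum _ _ _ hlow
  have hS_sum : c * #S ≤ ∑ t ∈ S, f t := by
    rw [mul_comm, ← nsmul_eq_mul]; exact card_nsmul_le_sum _ _ _ fun t ht => hlow t (hST ht)
  have hS_pos : 0 < ∑ t ∈ S, f t := (by positivity : 0 < c * #S).trans_le hS_sum
  have hsum_le : ∑ t ∈ S, f t ≤ ∑ t ∈ T, f t :=
    sum_le_sum_of_subset_of_nonneg hST fun t ht _ => hc.le.trans (hlow t ht)
  calc |f s / ∑ t ∈ T, f t - f s / ∑ t ∈ S, f t|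
      = f s * (∑ t ∈ T, f t - ∑ t ∈ S, f t) / ((∑ t ∈ T, f t) * ∑ t ∈ S, f t) :=
        abs_div_sub_div_of_le (hc.le.trans hfs_low) hS_pos hsum_le
    _ ≤ C * (C * (#T - #S)) / (c * #T * (c * #S)) := by
        have hnum : f s * (∑ t ∈ T, f t - ∑ t ∈ S, f t) ≤ C * (C * (#T - #S)) :=
          mul_le_mul hfs_up (sum_sub_sum_le_of_subset hST hup) (sub_nonneg.mpr hsum_le) hC
        have hden : c * #T * (c * #S) ≤ (∑ t ∈ T, f t) * ∑ t ∈ S, f t :=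
          mul_le_mul hT_sum hS_sum (by positivity) (hS_pos.le.trans hsum_le)
        exact div_le_div₀ (mul_nonneg hC (mul_nonneg hC (sub_nonneg.mpr hcard_le))) hnum
          (by positivity) hden
    _ = (C / c) ^ 2 * ((1 - #S / #T) / #S) := by
        field_simp

theorem softmax_subset_approx_general {α : Type*} (Sstar S : Finset α)
    (hS : S.Nonempty) (hsub : S ⊆ Sstar)
    (τ : ℝ)
    (E : α → ℝ)
    (M : ℕ) (hM : S.card = M)
    (cbar clow : ℝ) (hclow : 1 ≤ clow)
    (hub : ∀ s ∈ Sstar, Real.exp (E s / τ) ≤ cbar)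
    (hlb : ∀ s ∈ Sstar, clow ≤ Real.exp (E s / τ))
    (r : ℝ) (hr : r = cbar / clow) :
    ∀ s ∈ S,
      |Real.exp (E s / τ) / (∑ s' ∈ Sstar, Real.exp (E s' / τ)) -
        Real.exp (E s / τ) / (∑ s' ∈ S, Real.exp (E s' / τ))| ≤
      r ^ 2 * ((1 - (M : ℝ) / (Sstar.card : ℝ)) / (M : ℝ)) := by
  intro s hs
  subst hM hr
  exact abs_div_sum_sub_div_sum_subset_le hS hsub (by linarith) hlb hub hs

/-- Proposition (Appendix A of the paper): the softmax distribution at temperature `τ`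
over a nonempty finite set `Sstar`, restricted/renormalized to a nonempty subset `S`
of cardinality `M`, differs pointwise from the full softmax by at most
`r² · (1 − M/|Sstar|) / M`, where `r = c̄/c` with `c̄ ≥ exp(E s / τ) ≥ c ≥ 1`. -/
theorem softmax_subset_approx {α : Type*} (Sstar S : Finset α)
    (hSstar : Sstar.Nonempty) (hS : S.Nonempty) (hsub : S ⊆ Sstar)
    (τ : ℝ) (hτ : 0 < τ)
    (E : α → ℝ) (hE : ∀ s ∈ Sstar, 0 ≤ E s)
    (M : ℕ) (hM : S.card = M)
    (cbar clow : ℝ) (hclow : 1 ≤ clow)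
    (hub : ∀ s ∈ Sstar, Real.exp (E s / τ) ≤ cbar)
    (hlb : ∀ s ∈ Sstar, clow ≤ Real.exp (E s / τ))
    (r : ℝ) (hr : r = cbar / clow) :
    ∀ s ∈ S,
      |Real.exp (E s / τ) / (∑ s' ∈ Sstar, Real.exp (E s' / τ)) -
        Real.exp (E s / τ) / (∑ s' ∈ S, Real.exp (E s' / τ))| ≤
      r ^ 2 * ((1 - (M : ℝ) / (Sstar.card : ℝ)) / (M : ℝ)) :=
  softmax_subset_approx_general Sstar S hS hsub τ E M hM cbar clow hclow hub hlb r hr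
end

section
/- Let S* be a finite nonempty set, let f : S* → ℝ be a function with f(s) > 0 for all s ∈ S*, and let S ⊆ S* be a nonempty subset with |S| = M. Suppose c̄ and c are real constants with c̄ ≥ f(s) ≥ c > 0 for all s ∈ S*, and set r = c̄/c. Define P*(s) = f(s) / ∑_{s' ∈ S*} f(s') and P(s) = f(s) / ∑_{s' ∈ S} f(s'). Then for every s ∈ S, |P*(s) − P(s)| ≤ r² · (1 − M/|S*|) / M. -/
/-!
Writing `A = ∑_{S*} f` and `B = ∑_S f`, the difference of the two normalizations at `s ∈ S` is
`f s · (A - B) / (A B)`. The numerator is at most `c̄ · c̄ (|S*| - M)`, since `A - B` sums at most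
`|S*| - M` weights, and the denominator is at least `c |S*| · c M`.
-/

open Finset

namespace Finset

variable {α : Type*} {U T : Finset α} {f : α → ℝ} {c cbar : ℝ}

lemma sum_sub_sum_le_of_subset (hTU : T ⊆ U) (hub : ∀ s ∈ U, f s ≤ cbar) :
    ∑ s ∈ U, f s - ∑ s ∈ T, f s ≤ cbar * (#U - #T) := by
  classical
  rw [← sum_sdiff_eq_sub hTU, ← Nat.cast_sub (card_le_card hTU), ← card_sdiff_of_subset hTU,
    mul_comm, ← nsmul_eq_mul]
  exact sum_le_card_nsmul _ _ _ fun s hs => hub s (mem_sdiff.1 hs).1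

lemma mul_card_le_sum (hlb : ∀ s ∈ T, c ≤ f s) : c * #T ≤ ∑ s ∈ T, f s := by
  rw [mul_comm, ← nsmul_eq_mul]
  exact card_nsmul_le_sum _ _ _ hlb

theorem abs_div_sum_sub_div_sum_le (hT : T.Nonempty) (hTU : T ⊆ U) (hc : 0 < c)
    (hlb : ∀ s ∈ U, c ≤ f s) (hub : ∀ s ∈ U, f s ≤ cbar) {s : α} (hs : s ∈ T) :
    |f s / ∑ x ∈ U, f x - f s / ∑ x ∈ T, f x| ≤ (cbar / c) ^ 2 * ((1 - #T / #U) / #T) := by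
  have hcardT : (0 : ℝ) < #T := by exact_mod_cast hT.card_pos
  have hcardU : (0 : ℝ) < #U := by exact_mod_cast (hT.mono hTU).card_pos
  have hsumT := mul_card_le_sum fun x hx => hlb x (hTU hx)
  have hsumU := mul_card_le_sum hlb
  have hfs : 0 < f s := hc.trans_le (hlb s (hTU hs))
  have hcbar : 0 ≤ cbar := hfs.le.trans (hub s (hTU hs))
  have hsum_le : ∑ x ∈ T, f x ≤ ∑ x ∈ U, f x :=
    sum_le_sum_of_subset_of_nonneg hTU fun x hx _ => (hc.trans_le (hlb x hx)).le
  have hdiff := sum_sub_sum_le_of_subset hTU hub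
  have hnum : f s * (∑ x ∈ U, f x - ∑ x ∈ T, f x) ≤ cbar * (cbar * (#U - #T)) :=
    mul_le_mul (hub s (hTU hs)) hdiff (sub_nonneg.2 hsum_le) hcbar
  have hden : (c * #U) * (c * #T) ≤ (∑ x ∈ U, f x) * ∑ x ∈ T, f x :=
    mul_le_mul hsumU hsumT (by positivity) ((mul_pos hc hcardU).le.trans hsumU)
  rw [abs_div_sub_div_of_le hfs.le ((mul_pos hc hcardT).trans_le hsumT) hsum_le]
  calc _ ≤ cbar * (cbar * (#U - #T)) / ((c * #U) * (c * #T)) :=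
        div_le_div₀ ((mul_nonneg hfs.le (sub_nonneg.2 hsum_le)).trans hnum) hnum (by positivity) hden
    _ = _ := by field_simp

end Finset

theorem weight_subset_approx_general {α : Type*} (Sstar S : Finset α)
    (hS : S.Nonempty) (hsub : S ⊆ Sstar)
    (f : α → ℝ)
    (M : ℕ) (hM : S.card = M)
    (cbar clow : ℝ) (hclow : 0 < clow)
    (hub : ∀ s ∈ Sstar, f s ≤ cbar)
    (hlb : ∀ s ∈ Sstar, clow ≤ f s)
    (r : ℝ) (hr : r = cbar / clow) :
    ∀ s ∈ S,
      |f s / (∑ s' ∈ Sstar, f s') - f s / (∑ s' ∈ S, f s')| ≤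
      r ^ 2 * ((1 - (M : ℝ) / (Sstar.card : ℝ)) / (M : ℝ)) := by
  subst hM hr
  exact fun s hs => abs_div_sum_sub_div_sum_le hS hsub hclow hlb hub hs

/-- Abstract weight-function form of the paper's Proposition (Appendix A):
for a positive weight `f` on a nonempty finite set `Sstar` bounded as
`c ≤ f s ≤ c̄` with `c > 0`, and a nonempty subset `S` of cardinality `M`,
the pointwise difference between the normalizations of `f` over `Sstar` and
over `S` is at most `r² · (1 − M/|Sstar|)/M` with `r = c̄/c`. -/
theorem weight_subset_approx {α : Type*} (Sstar S : Finset α)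
    (hSstar : Sstar.Nonempty) (hS : S.Nonempty) (hsub : S ⊆ Sstar)
    (f : α → ℝ) (hf : ∀ s ∈ Sstar, 0 < f s)
    (M : ℕ) (hM : S.card = M)
    (cbar clow : ℝ) (hclow : 0 < clow)
    (hub : ∀ s ∈ Sstar, f s ≤ cbar)
    (hlb : ∀ s ∈ Sstar, clow ≤ f s)
    (r : ℝ) (hr : r = cbar / clow) :
    ∀ s ∈ S,
      |f s / (∑ s' ∈ Sstar, f s') - f s / (∑ s' ∈ S, f s')| ≤
      r ^ 2 * ((1 - (M : ℝ) / (Sstar.card : ℝ)) / (M : ℝ)) :=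
  weight_subset_approx_general Sstar S hS hsub f M hM cbar clow hclow hub hlb r hr
end
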